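/- arXiv:2007.12013 — 4 statements merged into one kernel-verified Lean document; each statement's English description precedes it below -/
import Mathlib

section
/- Let ρ > 2 and let f be holomorphic on the open ellipse D(ρ) with sup_{z ∈ D(ρ)} |f(z)| ≤ M_ρ < +∞. Define b_0 := (1/π) ∫_{−1}^{1} f(t)(1−t²)^{−1/2} dt and b_k := (2/π) ∫_{−1}^{1} f(t) T_k(t)(1−t²)^{−1/2} dt for k ≥ 1. Then for every n ∈ ℕ and every ρ' ∈ [1, ρ/2), sup_{t ∈ [−ρ', ρ']} |f(t) − Σ_{k=0}^{n−1} b_k T_k(t)| ≤ 2 M_ρ (1 − 2ρ'/ρ)^{−1} (2ρ'/ρ)^n. -/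
open MeasureTheory Real

noncomputable section

/-- Euclidean space ℝ^d. -/
abbrev Ed (d : ℕ) := EuclideanSpace ℝ (Fin d)

/-- The Fourier transform  ℱv(ξ) = (2π)^{-d} ∫ e^{i ξ·x} v(x) dx. -/
def FT {d : ℕ} (v : Ed d → ℂ) (ξ : Ed d) : ℂ :=
  ((((2 * π) ^ d)⁻¹ : ℝ) : ℂ) * ∫ x : Ed d, Complex.exp (Complex.I * ((inner ℝ ξ x : ℝ) : ℂ)) * v x

/-- The inverse Fourier transform  ℱ⁻¹u(x) = ∫ u(ξ) e^{-i ξ·x} dξ. -/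
def IFT {d : ℕ} (u : Ed d → ℂ) (x : Ed d) : ℂ :=
  ∫ ξ : Ed d, u ξ * Complex.exp (-(Complex.I * ((inner ℝ ξ x : ℝ) : ℂ)))

/-- Q_v(λ) = (2π)^{-d} ∫ e^{λ|x|} |v(x)| dx. -/
def Qv {d : ℕ} (v : Ed d → ℂ) (lam : ℝ) : ℝ :=
  ((2 * π) ^ d)⁻¹ * ∫ x : Ed d, Real.exp (lam * ‖x‖) * ‖v x‖

/-- The open ball B_r ⊆ ℝ^d. -/
def ball (d : ℕ) (r : ℝ) : Set (Ed d) := {ξ : Ed d | ‖ξ‖ < r}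

/-- The sup (L^∞) norm of f on the set S. -/
def supNormOn {d : ℕ} (S : Set (Ed d)) (f : Ed d → ℂ) : ℝ := ⨆ ξ ∈ S, ‖f ξ‖

/-- Membership in L^∞(B_r): measurable and bounded on B_r. -/
def MemLinf {d : ℕ} (r : ℝ) (w : Ed d → ℂ) : Prop :=
  Measurable w ∧ ∃ M : ℝ, ∀ ξ ∈ ball d r, ‖w ξ‖ ≤ M

/-- Chebyshev polynomial of the first kind, evaluated at a real point. -/
def cheb (k : ℕ) (t : ℝ) : ℝ := (Polynomial.Chebyshev.T ℝ k).eval t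

/-- Chebyshev coefficients a_k[w](θ) of the data w on B_r in direction θ. -/
def chebCoef {d : ℕ} (r : ℝ) (w : Ed d → ℂ) (k : ℕ) (θ : Ed d) : ℂ :=
  if k = 0 then
    ((π⁻¹ : ℝ) : ℂ) * ∫ t in (-r)..r, w (t • θ) / ((Real.sqrt (r ^ 2 - t ^ 2) : ℝ) : ℂ)
  else
    (((2 / π : ℝ)) : ℂ) *
      ∫ t in (-r)..r, w (t • θ) * ((cheb k (t / r) : ℝ) : ℂ) / ((Real.sqrt (r ^ 2 - t ^ 2) : ℝ) : ℂ)

/-- The Chebyshev-based extrapolation C_{R,n} w. -/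
def ChebExt {d : ℕ} (r R : ℝ) (n : ℕ) (w : Ed d → ℂ) (ξ : Ed d) : ℂ :=
  if ‖ξ‖ < r then w ξ
  else if ‖ξ‖ < R then
    ∑ k ∈ Finset.range n, chebCoef r w k (‖ξ‖⁻¹ • ξ) * ((cheb k (‖ξ‖ / r) : ℝ) : ℂ)
  else 0

/-- L_τ(δ) = max {1, ½((1-τ) ln(N/δ)/(σ r^ν))^τ }. -/
def Lt (N δ r σ ν τ : ℝ) : ℝ :=
  max 1 (((1 - τ) * Real.log (N / δ) / (σ * r ^ ν)) ^ τ / 2)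

/-- R_τ(δ) = r L_τ(δ). -/
def Rt (N δ r σ ν τ : ℝ) : ℝ := r * Lt N δ r σ ν τ

/-- n_τ(δ). -/
def nt (N δ r σ ν τ : ℝ) : ℕ :=
  if 0 < τ then
    ⌈(2 - τ) * Real.log (N / δ) / (Real.log 2 + (τ * ν)⁻¹ * Real.log (2 * Lt N δ r σ ν τ))⌉₊
  else 0

/-- The extrapolation C*_{τ,δ} = C_{R_τ(δ), n_τ(δ)}. -/
def Cstar {d : ℕ} (N δ r σ ν τ : ℝ) (w : Ed d → ℂ) : Ed d → ℂ :=
  ChebExt r (Rt N δ r σ ν τ) (nt N δ r σ ν τ) w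

/-- c(d) = d π^{d/2} / Γ(d/2 + 1), the surface measure of the unit sphere. -/
def cd (d : ℕ) : ℝ := d * π ^ ((d : ℝ) / 2) / Real.Gamma ((d : ℝ) / 2 + 1)

/-- The W^m norm: ‖(1+|ξ|²)^{m/2} ℱu‖_{L^∞}. -/
def Wnorm {d : ℕ} (m : ℝ) (v : Ed d → ℂ) : ℝ :=
  ⨆ ξ : Ed d, (1 + ‖ξ‖ ^ 2) ^ (m / 2) * ‖FT v ξ‖

/-- The L² norm of f on ℝ^d. -/
def L2Norm {d : ℕ} (f : Ed d → ℂ) : ℝ := Real.sqrt (∫ x : Ed d, ‖f x‖ ^ 2)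

/-- The Sobolev H^s norm: ‖ℱ⁻¹[(1+|ξ|²)^{s/2} ℱu]‖_{L²}. -/
def Hnorm {d : ℕ} (s : ℝ) (v : Ed d → ℂ) : ℝ :=
  L2Norm (IFT fun ξ => (((1 + ‖ξ‖ ^ 2) ^ (s / 2) : ℝ) : ℂ) * FT v ξ)

/-- The open ellipse D(ρ) = { cos z : |Im z| < ln ρ } ⊆ ℂ. -/
def ellipse (ρ : ℝ) : Set ℂ := {w : ℂ | ∃ z : ℂ, |z.im| < Real.log ρ ∧ Complex.cos z = w}

/-- Chebyshev coefficients b_k of a function on [-1,1]. -/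
def chebCoef1 (f : ℂ → ℂ) (k : ℕ) : ℂ :=
  if k = 0 then
    ((π⁻¹ : ℝ) : ℂ) * ∫ t in (-1 : ℝ)..1, f t / ((Real.sqrt (1 - t ^ 2) : ℝ) : ℂ)
  else
    (((2 / π : ℝ)) : ℂ) *
      ∫ t in (-1 : ℝ)..1, f t * ((cheb k t : ℝ) : ℂ) / ((Real.sqrt (1 - t ^ 2) : ℝ) : ℂ)

/-- The instability example v_{k,m,ε}(x) = ε |k|^{-m} e^{-|x|²/2} cos(k·x). -/
def vkme {d : ℕ} (k : Ed d) (m : ℕ) (ε : ℝ) (x : Ed d) : ℂ :=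
  ((ε * (‖k‖ ^ m)⁻¹ * Real.exp (-(‖x‖ ^ 2) / 2) * Real.cos (inner ℝ k x : ℝ) : ℝ) : ℂ)

/-!
Put `F(z) = f(cos z)`: it is holomorphic and `2π`-periodic on the strip `|Im z| < log ρ`, and
bounded there by `M`. Shifting the contour of its Fourier coefficients `c_k` to height `∓ log ρ`
gives `|c_k| ≤ M ρ^{-|k|}`, so its Fourier series converges to `F` on the whole strip. Since `F`
is even, `c_{-k} = c_k`, and pairing `k` with `-k` turns the Fourier series at `z` into the
Chebyshev series `∑ b_k cos(k z) = ∑ b_k T_k(cos z)`, the substitution `t = cos θ` identifying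
`b_k` with `2 c_k` (and `b_0` with `c_0`). A real `t` with `|t| ≤ ρ'` is `cos z` for some `z`
with `|Im z| ≤ log (2ρ')`, whence `|T_k(t)| ≤ (2ρ')^k`; the error is then dominated by a
geometric tail in `2ρ'/ρ`.
-/

open Complex (I)

theorem norm_sub_sum_range_le_of_hasSum {E : Type*} [NormedAddCommGroup E] {a : ℕ → E} {s : E}
    {C r : ℝ} (hs : HasSum a s) (hr : r < 1) (ha : ∀ m, ‖a m‖ ≤ C * r ^ m) (n : ℕ) :
    ‖s - ∑ m ∈ Finset.range n, a m‖ ≤ C * (1 - r)⁻¹ * r ^ n := by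
  have hstep : ∀ m, dist (∑ i ∈ Finset.range m, a i) (∑ i ∈ Finset.range (m + 1), a i) ≤
      C * r ^ m := by
    intro m
    rw [dist_comm, dist_eq_norm, Finset.sum_range_succ, add_sub_cancel_left]
    exact ha m
  have := dist_le_of_le_geometric_of_tendsto r C hr hstep hs.tendsto_sum_nat n
  rw [dist_comm, dist_eq_norm] at this
  linarith [show C * r ^ n / (1 - r) = C * (1 - r)⁻¹ * r ^ n by ring]

theorem summable_mul_pow_natAbs {q : ℝ} (C : ℝ) (hq₀ : 0 ≤ q) (hq₁ : q < 1) :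
    Summable fun k : ℤ => C * q ^ k.natAbs :=
  .of_nat_of_neg (by simpa using (summable_geometric_of_lt_one hq₀ hq₁).mul_left C)
    (by simpa using (summable_geometric_of_lt_one hq₀ hq₁).mul_left C)

def fourierCoeffTwoPi (g : ℝ → ℂ) (k : ℤ) : ℂ :=
  (2 * π : ℂ)⁻¹ * ∫ x in (0 : ℝ)..2 * π, Complex.exp (-(k * x * I)) * g x

section FourierCoeffTwoPi

variable {g : ℝ → ℂ}

theorem norm_fourierCoeffTwoPi_le {M : ℝ} (hg : ∀ x, ‖g x‖ ≤ M) (k : ℤ) :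
    ‖fourierCoeffTwoPi g k‖ ≤ M := by
  have hint : ‖∫ x in (0 : ℝ)..2 * π, Complex.exp (-(k * x * I)) * g x‖ ≤
      M * |2 * π - 0| :=
    intervalIntegral.norm_integral_le_of_norm_le_const fun x _ => by
      simpa [Complex.norm_exp] using hg x
  rw [sub_zero, abs_of_pos two_pi_pos] at hint
  rw [fourierCoeffTwoPi, norm_mul, norm_inv, show ‖(2 * π : ℂ)‖ = 2 * π by simp [pi_pos.le],
    inv_mul_le_iff₀ two_pi_pos]
  linarith

theorem hasSum_fourierCoeffTwoPi (hg : Continuous g) (hper : Function.Periodic g (2 * π))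
    (hs : Summable (fourierCoeffTwoPi g)) (x : ℝ) :
    HasSum (fun k : ℤ => fourierCoeffTwoPi g k * Complex.exp (k * x * I)) (g x) := by
  have : Fact (0 < 2 * π) := ⟨two_pi_pos⟩
  let gC : C(AddCircle (2 * π), ℂ) := ⟨hper.lift, hg.quotient_liftOn' _⟩
  have hfourier (k : ℤ) (x : ℝ) :
      fourier k (x : AddCircle (2 * π)) = Complex.exp (k * x * I) := by
    rw [fourier_coe_apply]
    congr 1
    push_cast
    field_simp
  have hcoeff : fourierCoeff gC = fourierCoeffTwoPi g := by
    ext k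
    rw [fourierCoeff_eq_intervalIntegral _ k 0, zero_add, fourierCoeffTwoPi, Complex.real_smul]
    push_cast
    congr 1
    · ring
    refine intervalIntegral.integral_congr fun y _ => ?_
    simp only [hfourier, smul_eq_mul, Int.cast_neg, neg_mul]
    rfl
  have hsum := has_pointwise_sum_fourier_series_of_summable (hcoeff ▸ hs) (x : AddCircle (2 * π))
  simp only [hcoeff, hfourier, smul_eq_mul] at hsum
  exact hper.lift_coe x ▸ hsum

theorem integral_exp_mul_eq_two_mul_integral_cos (hg : Continuous g)
    (hsymm : ∀ x, g (2 * π - x) = g x) (k : ℤ) :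
    ∫ x in (0 : ℝ)..2 * π, Complex.exp (-(k * x * I)) * g x =
      2 * ∫ x in (0 : ℝ)..π, Complex.cos (k * x) * g x := by
  have hint (s : ℂ) (u v : ℝ) :
      IntervalIntegrable (fun x : ℝ => Complex.exp (s * x * I) * g x) volume u v :=
    (by fun_prop : Continuous fun x : ℝ => Complex.exp (s * x * I) * g x).intervalIntegrable u v
  have hreflect : ∫ x in π..2 * π, Complex.exp (-(k * x * I)) * g x =
      ∫ x in (0 : ℝ)..π, Complex.exp (k * x * I) * g x := by
    have := intervalIntegral.integral_comp_sub_left (a := 0) (b := π)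
      (fun x : ℝ => Complex.exp (-(k * x * I)) * g x) (2 * π)
    rw [show 2 * π - π = π by ring, sub_zero] at this
    rw [← this]
    refine intervalIntegral.integral_congr fun x _ => ?_
    simp only [hsymm]
    rw [show -((k : ℂ) * ↑(2 * π - x) * I) = k * x * I + (-k : ℤ) * (2 * π * I) by
      push_cast; ring, Complex.exp_add, Complex.exp_int_mul_two_pi_mul_I, mul_one]
  have hsplit := intervalIntegral.integral_add_adjacent_intervals (b := π)
    (hint (-k) 0 π) (hint (-k) π (2 * π))
  simp only [neg_mul] at hsplit
  rw [← hsplit, hreflect,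
    ← intervalIntegral.integral_add (by simpa using hint (-k) 0 π) (hint k 0 π),
    ← intervalIntegral.integral_const_mul]
  refine intervalIntegral.integral_congr fun x _ => ?_
  rw [← mul_assoc, Complex.two_cos]
  ring_nf

theorem fourierCoeffTwoPi_neg_of_symm (hg : Continuous g)
    (hsymm : ∀ x, g (2 * π - x) = g x) (k : ℤ) :
    fourierCoeffTwoPi g (-k) = fourierCoeffTwoPi g k := by
  rw [fourierCoeffTwoPi, fourierCoeffTwoPi, integral_exp_mul_eq_two_mul_integral_cos hg hsymm,
    integral_exp_mul_eq_two_mul_integral_cos hg hsymm]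
  simp only [Int.cast_neg, neg_mul, Complex.cos_neg]

end FourierCoeffTwoPi

def horizontalStrip (a : ℝ) : Set ℂ := {z : ℂ | |z.im| < a}

section Strip

variable {F : ℂ → ℂ} {a M : ℝ}

theorem integral_add_mul_I_eq_of_periodic (hF : DifferentiableOn ℂ F (horizontalStrip a))
    (hper : Function.Periodic F (2 * π)) {y : ℝ} (hy : |y| < a) :
    ∫ x in (0 : ℝ)..2 * π, F (x + y * I) = ∫ x in (0 : ℝ)..2 * π, F x := by
  have hrect : Set.uIcc 0 (2 * π) ×ℂ Set.uIcc 0 y ⊆ horizontalStrip a := fun z hz =>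
    (by simpa using Set.abs_sub_left_of_mem_uIcc hz.2 : |z.im| ≤ |y|).trans_lt hy
  have hcauchy := Complex.integral_boundary_rect_eq_zero_of_differentiableOn F 0
    (2 * π + y * I) (hF.mono (by simpa using hrect))
  -- the two vertical sides cancel by periodicity
  have hsides : ∀ t : ℝ, F ((2 * π + y * I).re + t * I) = F ((0 : ℂ).re + t * I) := by
    intro t
    simpa [add_comm] using hper (t * I)
  simp only [hsides, add_sub_cancel_right, sub_eq_zero] at hcauchy
  simpa [eq_comm] using hcauchy

theorem exp_neg_int_mul_mul_I_periodic (k : ℤ) :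
    Function.Periodic (fun z : ℂ => Complex.exp (-(k * z * I))) (2 * π) := by
  intro z
  dsimp only
  rw [show -((k : ℂ) * (z + 2 * π) * I) = -(k * z * I) + (-k : ℤ) * (2 * π * I) by
    push_cast; ring, Complex.exp_add, Complex.exp_int_mul_two_pi_mul_I, mul_one]

theorem fourierCoeffTwoPi_add_mul_I (hF : DifferentiableOn ℂ F (horizontalStrip a))
    (hper : Function.Periodic F (2 * π)) {y : ℝ} (hy : |y| < a) (k : ℤ) :
    fourierCoeffTwoPi (fun x : ℝ => F (x + y * I)) k =
      Real.exp (-(k * y)) * fourierCoeffTwoPi (fun x : ℝ => F x) k := by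
  set H : ℂ → ℂ := fun z => Complex.exp (-(k * z * I)) * F z
  have hH : ∫ x in (0 : ℝ)..2 * π, H (x + y * I) = ∫ x in (0 : ℝ)..2 * π, H x :=
    integral_add_mul_I_eq_of_periodic
      (((Complex.differentiable_exp.comp (by fun_prop)).differentiableOn).mul hF)
      ((exp_neg_int_mul_mul_I_periodic k).mul hper) hy
  have hshift : ∀ x : ℝ, Complex.exp (-(k * x * I)) * F (x + y * I) =
      Real.exp (-(k * y)) * H (x + y * I) := by
    intro x
    simp only [H, Complex.ofReal_exp, ← mul_assoc, ← Complex.exp_add]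
    congr 2
    push_cast
    linear_combination (k * y : ℂ) * Complex.I_sq
  simp only [fourierCoeffTwoPi, hshift, intervalIntegral.integral_const_mul, hH, H]
  ring

theorem norm_fourierCoeffTwoPi_le_of_strip (ha : 0 < a)
    (hF : DifferentiableOn ℂ F (horizontalStrip a)) (hper : Function.Periodic F (2 * π))
    (hM : ∀ z ∈ horizontalStrip a, ‖F z‖ ≤ M) (k : ℤ) :
    ‖fourierCoeffTwoPi (fun x : ℝ => F x) k‖ ≤ M * Real.exp (-(|k| * a)) := by
  have hline : ∀ y ∈ Set.Ioo (-a) a,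
      ‖fourierCoeffTwoPi (fun x : ℝ => F x) k‖ ≤ M * Real.exp (k * y) := by
    intro y hy
    have hy' : |y| < a := abs_lt.2 hy
    have hcoeff : fourierCoeffTwoPi (fun x : ℝ => F x) k =
        Real.exp (k * y) * fourierCoeffTwoPi (fun x : ℝ => F (x + y * I)) k := by
      rw [fourierCoeffTwoPi_add_mul_I hF hper hy' k, ← mul_assoc, ← Complex.ofReal_mul,
        ← Real.exp_add, add_neg_cancel, Real.exp_zero, Complex.ofReal_one, one_mul]
    rw [hcoeff, norm_mul, Complex.norm_real, Real.norm_of_nonneg (Real.exp_pos _).le, mul_comm]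
    gcongr
    exact norm_fourierCoeffTwoPi_le (fun x => hM _ (by simpa [horizontalStrip] using hy')) k
  have hclosure := le_on_closure hline continuousOn_const (by fun_prop)
  rw [closure_Ioo (by linarith)] at hclosure
  rcases le_or_gt 0 k with hk | hk
  · calc _ ≤ M * Real.exp (k * -a) := hclosure ⟨le_rfl, by linarith⟩
      _ = _ := by rw [abs_of_nonneg hk, mul_neg]
  · calc _ ≤ M * Real.exp (k * a) := hclosure ⟨by linarith, le_rfl⟩
      _ = _ := by rw [abs_of_neg hk, Int.cast_neg, neg_mul, neg_neg]

theorem hasSum_fourierCoeffTwoPi_of_strip (hF : DifferentiableOn ℂ F (horizontalStrip a))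
    (hper : Function.Periodic F (2 * π))
    (hM : ∀ z ∈ horizontalStrip a, ‖F z‖ ≤ M) {z : ℂ} (hz : z ∈ horizontalStrip a) :
    HasSum (fun k : ℤ => fourierCoeffTwoPi (fun x : ℝ => F x) k * Complex.exp (k * z * I))
      (F z) := by
  have hz' : |z.im| < a := hz
  have ha : 0 < a := (abs_nonneg _).trans_lt hz'
  set g : ℝ → ℂ := fun x => F (x + z.im * I)
  have hg : Continuous g := hF.continuousOn.comp_continuous (by fun_prop) fun x => by
    simpa [horizontalStrip] using hz'
  have hgper : Function.Periodic g (2 * π) := fun x => by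
    simpa [g, add_right_comm] using hper (x + z.im * I)
  have hcoeff (k : ℤ) : fourierCoeffTwoPi g k =
      Real.exp (-(k * z.im)) * fourierCoeffTwoPi (fun x : ℝ => F x) k :=
    fourierCoeffTwoPi_add_mul_I hF hper hz' k
  set q := Real.exp (|z.im| - a)
  have hbound (k : ℤ) : ‖fourierCoeffTwoPi g k‖ ≤ M * q ^ k.natAbs := by
    rw [hcoeff, norm_mul, Complex.norm_real, Real.norm_of_nonneg (Real.exp_pos _).le,
      ← Real.exp_nat_mul, Nat.cast_natAbs]
    calc Real.exp (-(k * z.im)) * ‖fourierCoeffTwoPi (fun x : ℝ => F x) k‖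
        ≤ Real.exp (|k| * |z.im|) * (M * Real.exp (-(|k| * a))) := by
          gcongr
          · rw [Int.cast_abs, ← abs_mul]
            exact neg_le_abs _
          · exact norm_fourierCoeffTwoPi_le_of_strip ha hF hper hM k
      _ = M * Real.exp (|k| * (|z.im| - a)) := by
          rw [mul_left_comm, ← Real.exp_add]
          ring_nf
  have hs : Summable (fourierCoeffTwoPi g) :=
    .of_norm_bounded (summable_mul_pow_natAbs M (Real.exp_pos _).le
      (Real.exp_lt_one_iff.2 (by linarith))) hbound
  have hsum := hasSum_fourierCoeffTwoPi hg hgper hs z.re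
  simp only [g, Complex.re_add_im] at hsum
  refine hsum.congr_fun fun k => ?_
  have hexp : (k * z * I : ℂ) = (-(k * z.im) : ℝ) + k * z.re * I := by
    conv_lhs => rw [← Complex.re_add_im z]
    push_cast
    linear_combination (k * z.im : ℂ) * Complex.I_sq
  rw [hcoeff, hexp, Complex.exp_add, Complex.ofReal_exp]
  ring

end Strip

theorem cheb_eq_cos_mul {t : ℝ} {z : ℂ} (hz : Complex.cos z = t) (k : ℕ) :
    (cheb k t : ℂ) = Complex.cos (k * z) := by
  have := Polynomial.Chebyshev.T_complex_cos z k
  rw [hz, Int.cast_natCast] at this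
  rw [← this]
  simp [cheb]

theorem integral_cheb_mul_div_sqrt_eq (f : ℂ → ℂ) (k : ℕ) :
    ∫ t in (-1 : ℝ)..1, f t * (cheb k t : ℂ) / (√(1 - t ^ 2) : ℂ) =
      ∫ θ in (0 : ℝ)..π, Complex.cos (k * θ) * f (Complex.cos θ) := by
  have himage : Real.cos '' Set.Ioo 0 π = Set.Ioo (-1) 1 :=
    Real.cosPartialHomeomorph.image_source_eq_target
  rw [intervalIntegral.integral_of_le (by norm_num), intervalIntegral.integral_of_le pi_pos.le,
    integral_Ioc_eq_integral_Ioo, integral_Ioc_eq_integral_Ioo,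
    ← himage,
    integral_image_eq_integral_abs_deriv_smul measurableSet_Ioo
      (fun θ _ => (Real.hasDerivAt_cos θ).hasDerivWithinAt)
      (Real.injOn_cos.mono Set.Ioo_subset_Icc_self)]
  refine setIntegral_congr_fun measurableSet_Ioo fun θ hθ => ?_
  have hsin : 0 < Real.sin θ := Real.sin_pos_of_pos_of_lt_pi hθ.1 hθ.2
  have hsqrt : √(1 - Real.cos θ ^ 2) = Real.sin θ := by
    rw [← Real.sin_sq, Real.sqrt_sq hsin.le]
  simp only [abs_neg, abs_of_pos hsin, hsqrt, Complex.real_smul,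
    cheb_eq_cos_mul (Complex.ofReal_cos θ).symm, Complex.ofReal_cos]
  rw [mul_div_cancel₀ _ (Complex.ofReal_ne_zero.2 hsin.ne'), mul_comm]

theorem comp_cos_two_pi_sub (f : ℂ → ℂ) (x : ℝ) :
    f (Complex.cos ↑(2 * π - x)) = f (Complex.cos x) := by
  push_cast
  rw [Complex.cos_two_pi_sub]

theorem chebCoef1_eq_fourierCoeffTwoPi {f : ℂ → ℂ} (hf : Continuous fun θ : ℝ => f (Complex.cos θ))
    (k : ℕ) :
    chebCoef1 f k =
      (if k = 0 then 1 else 2) * fourierCoeffTwoPi (fun θ : ℝ => f (Complex.cos θ)) k := by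
  have hπ : (π : ℂ) ≠ 0 := Complex.ofReal_ne_zero.2 pi_ne_zero
  rw [chebCoef1, fourierCoeffTwoPi,
    integral_exp_mul_eq_two_mul_integral_cos hf (comp_cos_two_pi_sub f), Int.cast_natCast]
  split_ifs with hk
  · subst hk
    have h0 := integral_cheb_mul_div_sqrt_eq f 0
    simp only [cheb, Nat.cast_zero, Polynomial.Chebyshev.T_zero, Polynomial.eval_one,
      Complex.ofReal_one, mul_one, zero_mul, Complex.cos_zero, one_mul] at h0 ⊢
    rw [h0]
    push_cast
    field_simp
  · rw [integral_cheb_mul_div_sqrt_eq]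
    push_cast
    field_simp

section ChebyshevExpansion

variable {ρ M : ℝ} {f : ℂ → ℂ}

theorem continuous_comp_cos_ofReal (hρ : 0 < Real.log ρ) (hf : ContinuousOn f (ellipse ρ)) :
    Continuous fun θ : ℝ => f (Complex.cos θ) :=
  hf.comp_continuous (by fun_prop) fun θ => ⟨θ, by simpa using hρ, rfl⟩

theorem differentiableOn_comp_cos (hf : DifferentiableOn ℂ f (ellipse ρ)) :
    DifferentiableOn ℂ (fun w => f (Complex.cos w)) (horizontalStrip (Real.log ρ)) :=
  hf.comp Complex.differentiable_cos.differentiableOn fun w hw => ⟨w, hw, rfl⟩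

theorem hasSum_chebCoef1_mul_cos (hf : DifferentiableOn ℂ f (ellipse ρ))
    (hM : ∀ w ∈ ellipse ρ, ‖f w‖ ≤ M) {z : ℂ} (hz : |z.im| < Real.log ρ) :
    HasSum (fun m : ℕ => chebCoef1 f m * Complex.cos (m * z)) (f (Complex.cos z)) := by
  have hρ : 0 < Real.log ρ := (abs_nonneg _).trans_lt hz
  set c := fourierCoeffTwoPi (fun θ : ℝ => f (Complex.cos θ))
  have hc := continuous_comp_cos_ofReal hρ hf.continuousOn
  have hsum := (hasSum_fourierCoeffTwoPi_of_strip (differentiableOn_comp_cos hf)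
    (Complex.cos_periodic.comp f)
    (fun w hw => hM _ ⟨w, hw, rfl⟩) hz).nat_add_neg.sub (hasSum_ite_eq 0 (c 0))
  rw [show f (Complex.cos z) + c 0 * Complex.exp ((0 : ℤ) * z * I) - c 0 = f (Complex.cos z) by
    simp] at hsum
  refine hsum.congr_fun fun m => ?_
  rw [chebCoef1_eq_fourierCoeffTwoPi hc m, fourierCoeffTwoPi_neg_of_symm hc (comp_cos_two_pi_sub f)]
  split_ifs with hm
  · subst hm
    simp [c]
  · have h2cos := Complex.two_cos (m * z)
    rw [show -((m : ℂ) * z) * I = ((-(m : ℤ) : ℤ) : ℂ) * z * I by push_cast; ring,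
      show (m : ℂ) * z * I = ((m : ℤ) : ℂ) * z * I by push_cast; ring] at h2cos
    linear_combination (c m) * h2cos

theorem norm_chebCoef1_le (hρ : 1 < ρ) (hf : DifferentiableOn ℂ f (ellipse ρ))
    (hM : ∀ w ∈ ellipse ρ, ‖f w‖ ≤ M) (m : ℕ) : ‖chebCoef1 f m‖ ≤ 2 * M * (ρ ^ m)⁻¹ := by
  have hlog : 0 < Real.log ρ := Real.log_pos hρ
  have hM₀ : 0 ≤ M := (norm_nonneg _).trans (hM _ ⟨0, by simpa using hlog, rfl⟩)
  have hcoeff := norm_fourierCoeffTwoPi_le_of_strip hlog (differentiableOn_comp_cos hf)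
    (Complex.cos_periodic.comp f) (fun w hw => hM _ ⟨w, hw, rfl⟩) m
  rw [Int.cast_abs, Int.cast_natCast, abs_of_nonneg (Nat.cast_nonneg m), Real.exp_neg,
    Real.exp_nat_mul, Real.exp_log (by linarith)] at hcoeff
  rw [chebCoef1_eq_fourierCoeffTwoPi (continuous_comp_cos_ofReal hlog hf.continuousOn), norm_mul,
    mul_assoc]
  gcongr
  split_ifs <;> norm_num

end ChebyshevExpansion

theorem norm_cos_le_exp_abs_im (z : ℂ) : ‖Complex.cos z‖ ≤ Real.exp |z.im| := by
  have h2 : ‖2 * Complex.cos z‖ ≤ 2 * Real.exp |z.im| := by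
    rw [Complex.two_cos]
    refine (norm_add_le _ _).trans ?_
    rw [Complex.norm_exp, Complex.norm_exp, two_mul]
    gcongr <;> simp [neg_le_abs, le_abs_self]
  rw [norm_mul, Complex.norm_two] at h2
  linarith

theorem exists_cos_eq_of_abs_le {R t : ℝ} (hR : 1 ≤ R) (ht : |t| ≤ R) :
    ∃ z : ℂ, Complex.cos z = t ∧ |z.im| ≤ Real.log (2 * R) := by
  rcases le_or_gt |t| 1 with h1 | h1
  · obtain ⟨ht₁, ht₂⟩ := abs_le.1 h1
    exact ⟨Real.arccos t, by rw [← Complex.ofReal_cos, Real.cos_arccos ht₁ ht₂],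
      by simpa using Real.log_nonneg (by linarith)⟩
  have hs₀ : 0 ≤ Real.arcosh |t| := Real.arcosh_nonneg h1.le
  have hs : Real.arcosh |t| ≤ Real.log (2 * R) := by
    rw [Real.le_log_iff_exp_le (by positivity), Real.exp_arcosh h1.le]
    have : √(|t| ^ 2 - 1) ≤ |t| := by
      conv_rhs => rw [← Real.sqrt_sq (abs_nonneg t)]
      exact Real.sqrt_le_sqrt (by linarith)
    linarith
  have hcosh : Complex.cos (Real.arcosh |t| * I) = |t| := by
    rw [Complex.cos_mul_I, ← Complex.ofReal_cosh, Real.cosh_arcosh h1.le]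
  rcases le_or_gt 0 t with ht0 | ht0
  · exact ⟨Real.arcosh |t| * I, by rw [hcosh, abs_of_nonneg ht0], by simpa [abs_of_nonneg hs₀]⟩
  · refine ⟨π - Real.arcosh |t| * I, ?_, by simpa [abs_of_nonneg hs₀]⟩
    rw [Complex.cos_pi_sub, hcosh, abs_of_neg ht0]
    push_cast
    ring

theorem abs_cheb_le {R t : ℝ} (hR : 1 ≤ R) (ht : |t| ≤ R) (m : ℕ) : |cheb m t| ≤ (2 * R) ^ m := by
  obtain ⟨z, hz, hzR⟩ := exists_cos_eq_of_abs_le hR ht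
  calc |cheb m t| = ‖Complex.cos (m * z)‖ := by
        rw [← cheb_eq_cos_mul hz, Complex.norm_real, Real.norm_eq_abs]
    _ ≤ Real.exp |(m * z).im| := norm_cos_le_exp_abs_im _
    _ ≤ Real.exp (m * Real.log (2 * R)) := by
        gcongr
        simp only [Complex.mul_im, Complex.natCast_re, Complex.natCast_im, zero_mul, add_zero,
          abs_mul, Nat.abs_cast]
        gcongr
    _ = (2 * R) ^ m := by rw [Real.exp_nat_mul, Real.exp_log (by positivity)]

theorem chebyshev_approximation_general (ρ M : ℝ) (f : ℂ → ℂ)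
    (hf : DifferentiableOn ℂ f (ellipse ρ))
    (hM : ∀ z ∈ ellipse ρ, ‖f z‖ ≤ M)
    (n : ℕ) (ρ' : ℝ) (hρ'1 : 1 ≤ ρ') (hρ'2 : ρ' < ρ / 2) :
    ∀ t : ℝ, t ∈ Set.Icc (-ρ') ρ' →
      ‖f t - ∑ k ∈ Finset.range n, chebCoef1 f k * ((cheb k t : ℝ) : ℂ)‖ ≤
        2 * M * (1 - 2 * ρ' / ρ)⁻¹ * (2 * ρ' / ρ) ^ n := by
  intro t ht
  have hρ : 0 < ρ := by linarith
  obtain ⟨z, hzt, hz⟩ := exists_cos_eq_of_abs_le hρ'1 (abs_le.2 ht)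
  have hzρ : |z.im| < Real.log ρ := hz.trans_lt (Real.log_lt_log (by linarith) (by linarith))
  have hsum := hasSum_chebCoef1_mul_cos hf hM hzρ
  simp only [← cheb_eq_cos_mul hzt, hzt] at hsum
  refine norm_sub_sum_range_le_of_hasSum hsum ((div_lt_one hρ).2 (by linarith)) (fun m => ?_) n
  have hcoeff := norm_chebCoef1_le (by linarith) hf hM m
  calc ‖chebCoef1 f m * (cheb m t : ℂ)‖ = ‖chebCoef1 f m‖ * |cheb m t| := by
        rw [norm_mul, Complex.norm_real, Real.norm_eq_abs]
    _ ≤ 2 * M * (ρ ^ m)⁻¹ * (2 * ρ') ^ m :=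
        mul_le_mul hcoeff (abs_cheb_le hρ'1 (abs_le.2 ht) m) (abs_nonneg _)
          ((norm_nonneg _).trans hcoeff)
    _ = 2 * M * (2 * ρ' / ρ) ^ m := by
        rw [div_pow]
        ring

/-- Lemma 7.1 of Isaev–Novikov (Chebyshev approximation of holomorphic functions). -/
theorem chebyshev_approximation (ρ M : ℝ) (hρ : 2 < ρ) (f : ℂ → ℂ)
    (hf : DifferentiableOn ℂ f (ellipse ρ))
    (hM : ∀ z ∈ ellipse ρ, ‖f z‖ ≤ M)
    (n : ℕ) (ρ' : ℝ) (hρ'1 : 1 ≤ ρ') (hρ'2 : ρ' < ρ / 2) :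
    ∀ t : ℝ, t ∈ Set.Icc (-ρ') ρ' →
      ‖f t - ∑ k ∈ Finset.range n, chebCoef1 f k * ((cheb k t : ℝ) : ℂ)‖ ≤
        2 * M * (1 - 2 * ρ' / ρ)⁻¹ * (2 * ρ' / ρ) ^ n :=
  chebyshev_approximation_general ρ M f hf hM n ρ' hρ'1 hρ'2

end
end

section
/- Let d ≥ 1 and 0 < r ≤ R. Then for every n ∈ ℕ and all w₁, w₂ ∈ L^∞(B_r), ‖C_{R,n}w₁ − C_{R,n}w₂‖_{L^∞(B_R)} ≤ 2 (2R/r)^n ‖w₁ − w₂‖_{L^∞(B_r)}. -/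
open MeasureTheory Real

noncomputable section

/-! Since `C_{R,n}` is linear on bounded measurable data, it suffices to bound `C_{R,n} w` by
`sup_{B_r} |w|`. The Chebyshev weight `(r² - t²)^{-1/2}` has total mass `π` on `[-r, r]` and
`|T_k| ≤ 1` on `[-1, 1]`, so every coefficient `a_k(θ)` is at most `2 sup |w|`. For `x ≥ 1`,
`T_k(x) = cosh (k arcosh x) ≤ (x + √(x² - 1))^k ≤ (2x)^k`, so on `r ≤ |ξ| < R` the `k`-th term is at
most `2 sup |w| q^k` with `q = 2R/r ≥ 2`, and `∑_{k<n} q^k ≤ q^n`. -/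

open Set Polynomial.Chebyshev

lemma abs_cheb_le_two_mul_pow {x : ℝ} (hx : 1 ≤ x) (k : ℕ) : |cheb k x| ≤ (2 * x) ^ k := by
  have ha : 0 ≤ arcosh x := arcosh_nonneg hx
  have hT : cheb k x = cosh (k * arcosh x) := by
    have := T_real_cosh (arcosh x) k
    rw [cosh_arcosh hx] at this
    exact_mod_cast this
  calc |cheb k x| = cosh (k * arcosh x) := by rw [hT, abs_of_pos (cosh_pos _)]
    _ ≤ cosh (k * arcosh x) + sinh (k * arcosh x) :=
        le_add_of_nonneg_right (sinh_nonneg_iff.2 (mul_nonneg k.cast_nonneg ha))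
    _ = (x + √(x ^ 2 - 1)) ^ k := by rw [cosh_add_sinh, exp_nat_mul, exp_arcosh hx]
    _ ≤ (2 * x) ^ k := by
        gcongr
        rw [two_mul, add_le_add_iff_left, sqrt_le_left (by linarith)]
        linarith

lemma geom_sum_le_pow {q : ℝ} (hq : 2 ≤ q) (n : ℕ) : ∑ k ∈ Finset.range n, q ^ k ≤ q ^ n := by
  rw [geom_sum_eq (by linarith), div_le_iff₀ (by linarith)]
  nlinarith [one_le_pow₀ (n := n) (by linarith : 1 ≤ q)]

lemma inv_sqrt_sq_sub_sq {r : ℝ} (hr : 0 < r) (t : ℝ) :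
    (√(r ^ 2 - t ^ 2))⁻¹ = r⁻¹ * √(1 - (t / r) ^ 2)⁻¹ := by
  rw [sqrt_inv, ← mul_inv, ← sqrt_sq hr.le, ← sqrt_mul (sq_nonneg r), sqrt_sq hr.le]
  congr 2
  field_simp

lemma intervalIntegrable_inv_sqrt_sq_sub_sq {r : ℝ} (hr : 0 < r) :
    IntervalIntegrable (fun t => (√(r ^ 2 - t ^ 2))⁻¹) volume (-r) r := by
  simp_rw [inv_sqrt_sq_sub_sq hr]
  refine IntervalIntegrable.const_mul ?_ _
  have := intervalIntegrable_sqrt_one_sub_sq_inv.comp_mul_left (c := r⁻¹)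
  simpa [div_eq_inv_mul, hr.ne'] using this

lemma integral_inv_sqrt_sq_sub_sq {r : ℝ} (hr : 0 < r) :
    ∫ t in -r..r, (√(r ^ 2 - t ^ 2))⁻¹ = π := by
  have h1 : ∫ x in (-1 : ℝ)..1, √(1 - x ^ 2)⁻¹ = π := by
    have := integral_eval_T_real_measureT_zero
    rw [integral_measureT] at this
    simpa using this
  simp_rw [inv_sqrt_sq_sub_sq hr, intervalIntegral.integral_const_mul,
    intervalIntegral.integral_comp_div (fun x => √(1 - x ^ 2)⁻¹) hr.ne']
  rw [neg_div, div_self hr.ne', h1, smul_eq_mul, inv_mul_cancel_left₀ hr.ne']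

lemma ae_norm_div_sqrt_sq_sub_sq_le {r M : ℝ} {g : ℝ → ℂ} (hg : ∀ t ∈ Ioo (-r) r, ‖g t‖ ≤ M) :
    ∀ᵐ t, t ∈ Ioc (-r) r →
      ‖g t / (√(r ^ 2 - t ^ 2) : ℂ)‖ ≤ M * (√(r ^ 2 - t ^ 2))⁻¹ := by
  filter_upwards [compl_mem_ae_iff.2 (measure_singleton r)] with t hne ht
  rw [norm_div, Complex.norm_real, norm_of_nonneg (sqrt_nonneg _), div_eq_mul_inv]
  exact mul_le_mul_of_nonneg_right (hg t ⟨ht.1, lt_of_le_of_ne ht.2 hne⟩) (by positivity)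

lemma norm_integral_div_sqrt_sq_sub_sq_le {r M : ℝ} (hr : 0 < r) {g : ℝ → ℂ}
    (hg : ∀ t ∈ Ioo (-r) r, ‖g t‖ ≤ M) :
    ‖∫ t in -r..r, g t / (√(r ^ 2 - t ^ 2) : ℂ)‖ ≤ M * π := by
  calc ‖∫ t in -r..r, g t / (√(r ^ 2 - t ^ 2) : ℂ)‖
      ≤ ∫ t in -r..r, M * (√(r ^ 2 - t ^ 2))⁻¹ :=
        intervalIntegral.norm_integral_le_of_norm_le (by linarith)
          (ae_norm_div_sqrt_sq_sub_sq_le hg)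
          ((intervalIntegrable_inv_sqrt_sq_sub_sq hr).const_mul M)
    _ = M * π := by rw [intervalIntegral.integral_const_mul, integral_inv_sqrt_sq_sub_sq hr]

lemma intervalIntegrable_div_sqrt_sq_sub_sq {r M : ℝ} (hr : 0 < r) {g : ℝ → ℂ}
    (hgm : Measurable g) (hg : ∀ t ∈ Ioo (-r) r, ‖g t‖ ≤ M) :
    IntervalIntegrable (fun t => g t / (√(r ^ 2 - t ^ 2) : ℂ)) volume (-r) r := by
  refine ((intervalIntegrable_inv_sqrt_sq_sub_sq hr).const_mul M).mono_fun'
    (hgm.div (by fun_prop)).aestronglyMeasurable ?_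
  rw [uIoc_of_le (by linarith), Filter.EventuallyLE, ae_restrict_iff' measurableSet_Ioc]
  exact ae_norm_div_sqrt_sq_sub_sq_le hg

lemma chebCoef_eq_mul_integral {d : ℕ} (r : ℝ) (w : Ed d → ℂ) (k : ℕ) (θ : Ed d) :
    chebCoef r w k θ = ((if k = 0 then π⁻¹ else 2 / π : ℝ) : ℂ) *
      ∫ t in -r..r, w (t • θ) * (cheb k (t / r) : ℂ) / (√(r ^ 2 - t ^ 2) : ℂ) := by
  rcases eq_or_ne k 0 with rfl | hk
  · simp [chebCoef, cheb]
  · simp [chebCoef, hk]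

lemma norm_mul_cheb_le {d : ℕ} {r M : ℝ} (hr : 0 < r) {w : Ed d → ℂ}
    (hw : ∀ ξ ∈ ball d r, ‖w ξ‖ ≤ M) {θ : Ed d} (hθ : ‖θ‖ = 1) (k : ℕ) :
    ∀ t ∈ Ioo (-r) r, ‖w (t • θ) * (cheb k (t / r) : ℂ)‖ ≤ M := by
  intro t ht
  have hwt : ‖w (t • θ)‖ ≤ M := hw _ (show ‖t • θ‖ < r by simpa [norm_smul, hθ] using abs_lt.2 ht)
  have hT : |cheb k (t / r)| ≤ 1 := by
    refine abs_eval_T_real_le_one k ?_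
    rw [abs_div, abs_of_pos hr, div_le_one hr]
    exact (abs_lt.2 ht).le
  rw [norm_mul, Complex.norm_real, norm_eq_abs]
  simpa using mul_le_mul hwt hT (abs_nonneg _) ((norm_nonneg _).trans hwt)

lemma norm_chebCoef_le {d : ℕ} {r M : ℝ} (hr : 0 < r) {w : Ed d → ℂ}
    (hw : ∀ ξ ∈ ball d r, ‖w ξ‖ ≤ M) {θ : Ed d} (hθ : ‖θ‖ = 1) (k : ℕ) :
    ‖chebCoef r w k θ‖ ≤ 2 * M := by
  have hc : |(if k = 0 then π⁻¹ else 2 / π : ℝ)| ≤ 2 / π := by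
    split_ifs <;> rw [abs_of_pos (by positivity)]
    rw [inv_eq_one_div]
    gcongr
    norm_num
  rw [chebCoef_eq_mul_integral, norm_mul, Complex.norm_real, norm_eq_abs]
  calc _ ≤ 2 / π * (M * π) :=
        mul_le_mul hc (norm_integral_div_sqrt_sq_sub_sq_le hr (norm_mul_cheb_le hr hw hθ k))
          (norm_nonneg _) (by positivity)
    _ = 2 * M := by field_simp

lemma chebCoef_sub {d : ℕ} {r : ℝ} (hr : 0 < r) {w₁ w₂ : Ed d → ℂ} (hw₁ : MemLinf r w₁)
    (hw₂ : MemLinf r w₂) {θ : Ed d} (hθ : ‖θ‖ = 1) (k : ℕ) :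
    chebCoef r (w₁ - w₂) k θ = chebCoef r w₁ k θ - chebCoef r w₂ k θ := by
  have hint : ∀ w : Ed d → ℂ, MemLinf r w → IntervalIntegrable
      (fun t => w (t • θ) * (cheb k (t / r) : ℂ) / (√(r ^ 2 - t ^ 2) : ℂ)) volume (-r) r := by
    rintro w ⟨hwm, M, hM⟩
    refine intervalIntegrable_div_sqrt_sq_sub_sq hr ?_ (norm_mul_cheb_le hr hM hθ k)
    exact (hwm.comp (measurable_id.smul_const θ)).mul (by unfold cheb; fun_prop)
  simp only [chebCoef_eq_mul_integral, ← mul_sub,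
    ← intervalIntegral.integral_sub (hint w₁ hw₁) (hint w₂ hw₂),
    Pi.sub_apply, sub_mul, sub_div]

lemma chebExt_sub {d : ℕ} {r : ℝ} (hr : 0 < r) (R : ℝ) (n : ℕ) {w₁ w₂ : Ed d → ℂ}
    (hw₁ : MemLinf r w₁) (hw₂ : MemLinf r w₂) (ξ : Ed d) :
    ChebExt r R n (w₁ - w₂) ξ = ChebExt r R n w₁ ξ - ChebExt r R n w₂ ξ := by
  unfold ChebExt
  split_ifs with hξr
  · rfl
  · have hθ : ‖‖ξ‖⁻¹ • ξ‖ = 1 := norm_smul_inv_norm (norm_pos_iff.1 (hr.trans_le (not_lt.1 hξr)))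
    simp only [chebCoef_sub hr hw₁ hw₂ hθ, sub_mul, Finset.sum_sub_distrib]
  · simp

lemma norm_chebExt_le {d : ℕ} {r R M : ℝ} (hr : 0 < r) (hrR : r ≤ R) (n : ℕ) {w : Ed d → ℂ}
    (hw : ∀ ξ ∈ ball d r, ‖w ξ‖ ≤ M) (ξ : Ed d) :
    ‖ChebExt r R n w ξ‖ ≤ 2 * (2 * R / r) ^ n * M := by
  have hM : 0 ≤ M := (norm_nonneg _).trans (hw 0 (by simpa [ball] using hr))
  have hq : 2 ≤ 2 * R / r := by rw [le_div_iff₀ hr]; linarith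
  unfold ChebExt
  split_ifs with hξr
  · calc ‖w ξ‖ ≤ 1 * M := (hw ξ hξr).trans_eq (one_mul M).symm
      _ ≤ 2 * (2 * R / r) ^ n * M := by
          gcongr
          nlinarith [one_le_pow₀ (n := n) (by linarith : 1 ≤ 2 * R / r)]
  · have hξ : 1 ≤ ‖ξ‖ / r := (one_le_div hr).2 (not_lt.1 hξr)
    have hθ : ‖‖ξ‖⁻¹ • ξ‖ = 1 := norm_smul_inv_norm (norm_pos_iff.1 (by linarith))
    calc _ ≤ ∑ k ∈ Finset.range n, 2 * M * (2 * R / r) ^ k := by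
          refine norm_sum_le_of_le _ fun k _ => ?_
          rw [norm_mul, Complex.norm_real, norm_eq_abs]
          refine mul_le_mul (norm_chebCoef_le hr hw hθ k)
            ((abs_cheb_le_two_mul_pow hξ k).trans ?_) (abs_nonneg _) (by positivity)
          gcongr
          rw [mul_div_assoc]
          gcongr
      _ = 2 * M * ∑ k ∈ Finset.range n, (2 * R / r) ^ k := by rw [Finset.mul_sum]
      _ ≤ 2 * M * (2 * R / r) ^ n := by gcongr; exact geom_sum_le_pow hq n
      _ = 2 * (2 * R / r) ^ n * M := by ring
  · rw [norm_zero]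
    positivity

lemma norm_le_supNormOn {d : ℕ} {S : Set (Ed d)} {f : Ed d → ℂ} {C : ℝ}
    (hC : ∀ ξ ∈ S, ‖f ξ‖ ≤ C) {ξ : Ed d} (hξ : ξ ∈ S) : ‖f ξ‖ ≤ supNormOn S f := by
  have hbdd : BddAbove (range fun η => ⨆ _ : η ∈ S, ‖f η‖) := by
    refine ⟨max C 0, ?_⟩
    rintro x ⟨η, rfl⟩
    exact Real.iSup_le (fun h => (hC η h).trans (le_max_left _ _)) (le_max_right _ _)
  calc ‖f ξ‖ = ⨆ _ : ξ ∈ S, ‖f ξ‖ := (ciSup_pos (f := fun _ => ‖f ξ‖) hξ).symm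
    _ ≤ supNormOn S f := le_ciSup hbdd ξ

lemma supNormOn_le {d : ℕ} {S : Set (Ed d)} {f : Ed d → ℂ} {C : ℝ} (hC : 0 ≤ C)
    (h : ∀ ξ ∈ S, ‖f ξ‖ ≤ C) : supNormOn S f ≤ C :=
  Real.iSup_le (fun ξ => Real.iSup_le (h ξ) hC) hC

theorem extrapolation_data_stability_general {d : ℕ} (r R : ℝ)
    (hr : 0 < r) (hrR : r ≤ R) (n : ℕ)
    (w₁ w₂ : Ed d → ℂ) (hw₁ : MemLinf r w₁) (hw₂ : MemLinf r w₂) :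
    supNormOn (ball d R) (fun ξ => ChebExt r R n w₁ ξ - ChebExt r R n w₂ ξ) ≤
      2 * (2 * R / r) ^ n * supNormOn (ball d r) (fun ξ => w₁ ξ - w₂ ξ) := by
  obtain ⟨M₁, hM₁⟩ := hw₁.2
  obtain ⟨M₂, hM₂⟩ := hw₂.2
  have hdiff : ∀ ξ ∈ ball d r, ‖w₁ ξ - w₂ ξ‖ ≤ supNormOn (ball d r) (fun ξ => w₁ ξ - w₂ ξ) :=
    fun ξ => norm_le_supNormOn fun η hη =>
      (norm_sub_le _ _).trans (add_le_add (hM₁ η hη) (hM₂ η hη))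
  have hbound := norm_chebExt_le hr hrR n (w := w₁ - w₂) hdiff
  refine supNormOn_le ((norm_nonneg _).trans (hbound 0)) fun ξ _ => ?_
  rw [← chebExt_sub hr R n hw₁ hw₂]
  exact hbound ξ

/-- Lipschitz stability of the extrapolation C_{R,n} with respect to the data. -/
theorem extrapolation_data_stability {d : ℕ} (hd : 1 ≤ d) (r R : ℝ)
    (hr : 0 < r) (hrR : r ≤ R) (n : ℕ)
    (w₁ w₂ : Ed d → ℂ) (hw₁ : MemLinf r w₁) (hw₂ : MemLinf r w₂) :
    supNormOn (ball d R) (fun ξ => ChebExt r R n w₁ ξ - ChebExt r R n w₂ ξ) ≤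
      2 * (2 * R / r) ^ n * supNormOn (ball d r) (fun ξ => w₁ ξ - w₂ ξ) :=
  extrapolation_data_stability_general r R hr hrR n w₁ w₂ hw₁ hw₂

end
end

section
/- Let d ≥ 1, let v ∈ L¹(ℝ^d), let λ, r > 0 with 2λ > r and Q_v(λ) < +∞, and let θ ∈ ℝ^d with |θ| = 1. Set ρ := 2λ/r. Then there exists a function g holomorphic on the open ellipse D(ρ) such that g(s) = ℱv(s r θ) for every real s ∈ D(ρ) ∩ ℝ, and |g(ζ)| ≤ Q_v(λ) for every ζ ∈ D(ρ). -/
open MeasureTheory Real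

noncomputable section

/-! Along the line `ξ = s θ'` the Fourier transform is `s ↦ ∫ e^{i s ⟪θ', x⟫} v(x) dx`, and the
same integral with `s` replaced by `ζ ∈ ℂ` converges absolutely as long as `|Im ζ| |⟪θ', x⟫|` stays
below the exponential weight `λ |x|`; differentiation under the integral sign then makes it
holomorphic on the strip `|Im ζ| < λ / |θ'|`, with `Q_v(λ)` as a uniform bound. For `θ' = r θ` the
strip contains the ellipse `D(2λ/r)`, because `|Im cos z| ≤ |sinh (Im z)| < ρ / 2`. -/

theorem abs_im_lt_half_of_mem_ellipse {ρ : ℝ} (hρ : 0 < ρ) {ζ : ℂ} (hζ : ζ ∈ ellipse ρ) :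
    |ζ.im| < ρ / 2 := by
  obtain ⟨z, hz, rfl⟩ := hζ
  have hcos : |(Complex.cos z).im| ≤ |Real.sinh z.im| := by
    have him : (Complex.cos z).im = -(Real.sin z.re * Real.sinh z.im) := by
      rw [Complex.cos_eq]
      simp [Complex.sin_ofReal_re, Complex.sinh_ofReal_re]
    rw [him, abs_neg, abs_mul]
    exact mul_le_of_le_one_left (abs_nonneg _) (Real.abs_sin_le_one _)
  have hsinh : |Real.sinh z.im| < (ρ - ρ⁻¹) / 2 := by
    rw [Real.abs_sinh, ← Real.sinh_log hρ]
    exact Real.sinh_lt_sinh.mpr hz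
  have : 0 < ρ⁻¹ := inv_pos.mpr hρ
  linarith

theorem mul_exp_le_inv_mul_exp {δ : ℝ} (hδ : 0 < δ) (a t : ℝ) :
    t * Real.exp (a * t) ≤ δ⁻¹ * Real.exp ((a + δ) * t) := by
  have : δ * t ≤ Real.exp (δ * t) := by linarith [Real.add_one_le_exp (δ * t)]
  rw [add_mul, Real.exp_add, le_inv_mul_iff₀ hδ]
  nlinarith [Real.exp_pos (a * t)]

theorem norm_cexp_I_mul_le (ζ : ℂ) (t : ℝ) :
    ‖Complex.exp (Complex.I * ζ * t)‖ ≤ Real.exp (|ζ.im| * |t|) := by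
  rw [Complex.norm_exp, Real.exp_le_exp, ← abs_mul]
  have : (Complex.I * ζ * t).re = -(ζ.im * t) := by simp
  rw [this]
  exact neg_le_abs _

section FourierLaplace

variable {α : Type*} {φ : α → ℝ} {v : α → ℂ} {w : α → ℝ} {c : ℝ}

theorem norm_cexp_I_mul_mul_le {ζ : ℂ} (hζ : |ζ.im| ≤ c)
    (hdom : ∀ x, Real.exp (c * |φ x|) * ‖v x‖ ≤ w x) (x : α) :
    ‖Complex.exp (Complex.I * ζ * φ x) * v x‖ ≤ w x := by
  refine (norm_mul_le _ _).trans (le_trans ?_ (hdom x))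
  gcongr
  exact (norm_cexp_I_mul_le ζ (φ x)).trans (by gcongr)

theorem norm_deriv_cexp_I_mul_mul_le {δ : ℝ} (hδ : 0 < δ) {ζ : ℂ} (hζ : |ζ.im| + δ ≤ c)
    (hdom : ∀ x, Real.exp (c * |φ x|) * ‖v x‖ ≤ w x) (x : α) :
    ‖Complex.I * φ x * (Complex.exp (Complex.I * ζ * φ x) * v x)‖ ≤ δ⁻¹ * w x := by
  calc ‖Complex.I * φ x * (Complex.exp (Complex.I * ζ * φ x) * v x)‖
      ≤ |φ x| * Real.exp (|ζ.im| * |φ x|) * ‖v x‖ := by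
        rw [norm_mul, norm_mul, norm_mul, Complex.norm_I, one_mul, Complex.norm_real,
          Real.norm_eq_abs, ← mul_assoc]
        gcongr
        exact norm_cexp_I_mul_le ζ (φ x)
    _ ≤ δ⁻¹ * Real.exp ((|ζ.im| + δ) * |φ x|) * ‖v x‖ :=
        mul_le_mul_of_nonneg_right (mul_exp_le_inv_mul_exp hδ _ _) (norm_nonneg _)
    _ ≤ δ⁻¹ * w x := by
        rw [mul_assoc]
        gcongr
        exact le_trans (by gcongr) (hdom x)

variable [MeasurableSpace α] {μ : Measure α}

def fourierLaplace (μ : Measure α) (φ : α → ℝ) (v : α → ℂ) (ζ : ℂ) : ℂ :=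
  ∫ x, Complex.exp (Complex.I * ζ * φ x) * v x ∂μ

theorem norm_fourierLaplace_le (hw : Integrable w μ)
    (hdom : ∀ x, Real.exp (c * |φ x|) * ‖v x‖ ≤ w x) {ζ : ℂ} (hζ : |ζ.im| ≤ c) :
    ‖fourierLaplace μ φ v ζ‖ ≤ ∫ x, w x ∂μ :=
  norm_integral_le_of_norm_le hw (.of_forall (norm_cexp_I_mul_mul_le hζ hdom))

theorem aestronglyMeasurable_cexp_I_mul_mul (hφ : AEStronglyMeasurable φ μ)
    (hv : AEStronglyMeasurable v μ) (ζ : ℂ) :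
    AEStronglyMeasurable (fun x => Complex.exp (Complex.I * ζ * φ x) * v x) μ :=
  (Complex.continuous_exp.comp_aestronglyMeasurable
    ((Complex.continuous_ofReal.comp_aestronglyMeasurable hφ).const_mul _)).mul hv

theorem differentiableOn_fourierLaplace (hφ : AEStronglyMeasurable φ μ)
    (hv : AEStronglyMeasurable v μ) (hw : Integrable w μ)
    (hdom : ∀ x, Real.exp (c * |φ x|) * ‖v x‖ ≤ w x) :
    DifferentiableOn ℂ (fourierLaplace μ φ v) {ζ | |ζ.im| < c} := by
  rintro ζ₀ (hζ₀ : |ζ₀.im| < c)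
  set δ := (c - |ζ₀.im|) / 2 with hδ_def
  have hδ : 0 < δ := by linarith
  have hball : ∀ ζ ∈ Metric.ball ζ₀ δ, |ζ.im| + δ ≤ c := fun ζ hζ => by
    have := (abs_sub_abs_le_abs_sub ζ.im ζ₀.im).trans
      ((Complex.abs_im_le_norm (ζ - ζ₀)).trans (mem_ball_iff_norm.mp hζ).le)
    linarith
  have hderiv : ∀ x, ∀ ζ ∈ Metric.ball ζ₀ δ,
      HasDerivAt (fun ζ => Complex.exp (Complex.I * ζ * φ x) * v x)
        (Complex.I * φ x * (Complex.exp (Complex.I * ζ * φ x) * v x)) ζ := fun x ζ _ => by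
    have := ((((hasDerivAt_id ζ).const_mul Complex.I).mul_const (φ x : ℂ)).cexp).mul_const (v x)
    simp only [id, mul_one] at this
    exact this.congr_deriv (by ring)
  refine (hasDerivAt_integral_of_dominated_loc_of_deriv_le (Metric.ball_mem_nhds ζ₀ hδ)
    (.of_forall (aestronglyMeasurable_cexp_I_mul_mul hφ hv))
    (hw.mono' (aestronglyMeasurable_cexp_I_mul_mul hφ hv ζ₀)
      (.of_forall (norm_cexp_I_mul_mul_le hζ₀.le hdom)))
    ((Complex.continuous_ofReal.comp_aestronglyMeasurable hφ).const_mul Complex.I |>.mul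
      (aestronglyMeasurable_cexp_I_mul_mul hφ hv ζ₀))
    (.of_forall fun x ζ hζ => norm_deriv_cexp_I_mul_mul_le hδ (hball ζ hζ) hdom x)
    (hw.const_mul δ⁻¹) (.of_forall hderiv)).2.differentiableAt.differentiableWithinAt

end FourierLaplace

theorem FT_smul_eq_fourierLaplace {d : ℕ} (v : Ed d → ℂ) (η : Ed d) (s : ℝ) :
    FT v (s • η) = ((((2 * π) ^ d)⁻¹ : ℝ) : ℂ) * fourierLaplace volume (inner ℝ η) v s := by
  simp only [FT, fourierLaplace, real_inner_smul_left, Complex.ofReal_mul, mul_assoc]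

theorem FT_holomorphic_extension_general {d : ℕ}
    (v : Ed d → ℂ) (hv : Integrable v)
    (lam r : ℝ) (hlam : 0 < lam) (hr : 0 < r)
    (hQ : Integrable (fun x : Ed d => Real.exp (lam * ‖x‖) * ‖v x‖))
    (θ : Ed d) (hθ : ‖θ‖ = 1) (ρ : ℝ) (hρ : ρ = 2 * lam / r) :
    ∃ g : ℂ → ℂ, DifferentiableOn ℂ g (ellipse ρ) ∧
      (∀ s : ℝ, (s : ℂ) ∈ ellipse ρ → g s = FT v ((s * r) • θ)) ∧
      ∀ ζ ∈ ellipse ρ, ‖g ζ‖ ≤ Qv v lam := by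
  have hdom : ∀ x, Real.exp (lam / r * |inner ℝ (r • θ) x|) * ‖v x‖ ≤
      Real.exp (lam * ‖x‖) * ‖v x‖ := fun x => by
    have hinner : |inner ℝ (r • θ) x| ≤ r * ‖x‖ := by
      simpa [norm_smul, hθ, abs_of_pos hr] using abs_real_inner_le_norm (r • θ) x
    gcongr Real.exp ?_ * _
    calc lam / r * |inner ℝ (r • θ) x| ≤ lam / r * (r * ‖x‖) := by gcongr
      _ = lam * ‖x‖ := by field_simp
  have hstrip : ellipse ρ ⊆ {ζ | |ζ.im| < lam / r} := fun ζ hζ => by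
    have := abs_im_lt_half_of_mem_ellipse (by rw [hρ]; positivity) hζ
    have hhalf : ρ / 2 = lam / r := by rw [hρ]; ring
    exact hhalf ▸ this
  have hmeas : AEStronglyMeasurable (inner ℝ (r • θ)) (volume : Measure (Ed d)) :=
    (continuous_const.inner continuous_id).aestronglyMeasurable
  refine ⟨fun ζ => ((((2 * π) ^ d)⁻¹ : ℝ) : ℂ) * fourierLaplace volume (inner ℝ (r • θ)) v ζ,
    ((differentiableOn_fourierLaplace hmeas hv.aestronglyMeasurable hQ hdom).const_mul _).mono
      hstrip, fun s _ => by rw [mul_smul, FT_smul_eq_fourierLaplace], fun ζ hζ => ?_⟩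
  rw [norm_mul, Complex.norm_real, Real.norm_of_nonneg (by positivity), Qv]
  exact mul_le_mul_of_nonneg_left (norm_fourierLaplace_le hQ hdom (hstrip hζ).le) (by positivity)

/-- Holomorphic extension of s ↦ ℱv(srθ) to the ellipse D(2λ/r), bounded by Q_v(λ). -/
theorem FT_holomorphic_extension {d : ℕ} (hd : 1 ≤ d)
    (v : Ed d → ℂ) (hv : Integrable v)
    (lam r : ℝ) (hlam : 0 < lam) (hr : 0 < r) (h2 : r < 2 * lam)
    (hQ : Integrable (fun x : Ed d => Real.exp (lam * ‖x‖) * ‖v x‖))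
    (θ : Ed d) (hθ : ‖θ‖ = 1) (ρ : ℝ) (hρ : ρ = 2 * lam / r) :
    ∃ g : ℂ → ℂ, DifferentiableOn ℂ g (ellipse ρ) ∧
      (∀ s : ℝ, (s : ℂ) ∈ ellipse ρ → g s = FT v ((s * r) • θ)) ∧
      ∀ ζ ∈ ellipse ρ, ‖g ζ‖ ≤ Qv v lam :=
  FT_holomorphic_extension_general v hv lam r hlam hr hQ θ hθ ρ hρ

end
end

section
/- Let d ≥ 1, r > 0, ε > 0, let m > 0 be an integer, and let β₁ > m/2 and c₁ > 0. Then there exists K > 0 such that for every k ∈ ℝ^d with |k| ≥ K, ‖v_{k,m,ε}‖_{L^∞(ℝ^d)} > c₁ (ln(3 + ‖ℱv_{k,m,ε}‖_{L^∞(B_r)}^{−1}))^{−β₁}; here ‖v_{k,m,ε}‖_{L^∞(ℝ^d)} = ε|k|^{−m}. -/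
open MeasureTheory Real

noncomputable section

/-!
The Fourier transform of `v_{k,m,ε}` is explicit: a pair of Gaussians centred at `±k` with
amplitude `ε|k|^{-m}`. On `B_r` with `|k| ≥ 2r` it is therefore at most `ε e^{-|k|²/8}`, so the
logarithm in the estimate is at least `|k|²/16` and the right-hand side is `O(|k|^{-2β₁})`. As
`2β₁ > m`, this is eventually below `‖v_{k,m,ε}‖_∞ = ε|k|^{-m}`, attained at `x = 0`.
-/

section SupNorm

variable {d : ℕ} {S : Set (Ed d)} {f : Ed d → ℂ}

lemma supNormOn_le_s18 {a : ℝ} (ha : 0 ≤ a) (hf : ∀ ξ ∈ S, ‖f ξ‖ ≤ a) : supNormOn S f ≤ a :=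
  Real.iSup_le (fun ξ => Real.iSup_le (hf ξ) ha) ha

lemma norm_le_supNormOn_s18 {a : ℝ} (hf : ∀ ξ ∈ S, ‖f ξ‖ ≤ a) {x : Ed d} (hx : x ∈ S) :
    ‖f x‖ ≤ supNormOn S f := by
  have hbdd : BddAbove (Set.range fun ξ => ⨆ _ : ξ ∈ S, ‖f ξ‖) := by
    refine ⟨max a 0, ?_⟩
    rintro _ ⟨ξ, rfl⟩
    exact Real.iSup_le (fun hξ => (hf ξ hξ).trans (le_max_left a 0)) (le_max_right a 0)
  exact le_trans (by simp [hx]) (le_ciSup hbdd x)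

lemma supNormOn_eq_norm_of_forall_le {x : Ed d} (hx : x ∈ S) (hmax : ∀ ξ ∈ S, ‖f ξ‖ ≤ ‖f x‖) :
    supNormOn S f = ‖f x‖ :=
  le_antisymm (supNormOn_le_s18 (norm_nonneg _) hmax) (norm_le_supNormOn_s18 hmax hx)

end SupNorm

section Gaussian

variable {V : Type*} [NormedAddCommGroup V] [InnerProductSpace ℝ V]

lemma cexp_I_inner_mul_gaussian_mul_cos (ξ k x : V) :
    Complex.exp (Complex.I * (inner ℝ ξ x : ℝ)) *
        ((Real.exp (-‖x‖ ^ 2 / 2) * Real.cos (inner ℝ k x) : ℝ) : ℂ) =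
      (Complex.exp (-(1 / 2) * ‖x‖ ^ 2 + Complex.I * (inner ℝ (ξ + k) x : ℝ)) +
        Complex.exp (-(1 / 2) * ‖x‖ ^ 2 + Complex.I * (inner ℝ (ξ - k) x : ℝ))) / 2 := by
  rw [inner_add_left, inner_sub_left]
  push_cast
  rw [Complex.cos, show -(1 / 2 : ℂ) * (‖x‖ : ℂ) ^ 2 = -(‖x‖ : ℂ) ^ 2 / 2 by ring]
  simp only [mul_add, mul_sub, Complex.exp_add, Complex.exp_sub, neg_mul, Complex.exp_neg]
  field_simp

variable [FiniteDimensional ℝ V] [MeasurableSpace V] [BorelSpace V]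

lemma integrable_cexp_neg_half_sq_norm_add_I_inner (w : V) :
    Integrable fun x : V => Complex.exp (-(1 / 2) * ‖x‖ ^ 2 + Complex.I * (inner ℝ w x : ℝ)) :=
  GaussianFourier.integrable_cexp_neg_mul_sq_norm_add (by norm_num) Complex.I w

lemma integral_cexp_neg_half_sq_norm_add_I_inner (w : V) :
    ∫ x : V, Complex.exp (-(1 / 2) * ‖x‖ ^ 2 + Complex.I * (inner ℝ w x : ℝ)) =
      (((2 * π) ^ ((Module.finrank ℝ V : ℝ) / 2) * Real.exp (-‖w‖ ^ 2 / 2) : ℝ) : ℂ) := by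
  rw [GaussianFourier.integral_cexp_neg_mul_sq_norm_add (by norm_num) Complex.I w,
    Complex.ofReal_mul, Complex.ofReal_cpow (by positivity), Complex.ofReal_exp, Complex.I_sq]
  push_cast
  congr 2 <;> ring

end Gaussian

section Vkme

variable {d : ℕ} (k : Ed d) (m : ℕ) {ε : ℝ}

lemma norm_vkme_le (hε : 0 ≤ ε) (x : Ed d) : ‖vkme k m ε x‖ ≤ ε * (‖k‖ ^ m)⁻¹ := by
  rw [vkme, Complex.norm_real, Real.norm_eq_abs, abs_mul, abs_of_nonneg (by positivity)]
  have hexp : Real.exp (-‖x‖ ^ 2 / 2) ≤ 1 := Real.exp_le_one_iff.2 (by nlinarith [sq_nonneg ‖x‖])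
  calc ε * (‖k‖ ^ m)⁻¹ * Real.exp (-‖x‖ ^ 2 / 2) * |Real.cos (inner ℝ k x)|
      ≤ ε * (‖k‖ ^ m)⁻¹ * 1 * 1 := by gcongr; exact Real.abs_cos_le_one _
    _ = ε * (‖k‖ ^ m)⁻¹ := by ring

lemma supNormOn_univ_vkme (hε : 0 ≤ ε) : supNormOn Set.univ (vkme k m ε) = ε * (‖k‖ ^ m)⁻¹ := by
  have hzero : ‖vkme k m ε 0‖ = ε * (‖k‖ ^ m)⁻¹ := by
    simp [vkme, abs_of_nonneg hε]
  rw [supNormOn_eq_norm_of_forall_le (Set.mem_univ 0) fun x _ => hzero ▸ norm_vkme_le k m hε x,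
    hzero]

lemma FT_vkme (ξ : Ed d) :
    FT (vkme k m ε) ξ = ((ε * (‖k‖ ^ m)⁻¹ / (2 * (2 * π) ^ ((d : ℝ) / 2)) *
      (Real.exp (-‖ξ + k‖ ^ 2 / 2) + Real.exp (-‖ξ - k‖ ^ 2 / 2)) : ℝ) : ℂ) := by
  have hintegrand : (fun x => Complex.exp (Complex.I * (inner ℝ ξ x : ℝ)) * vkme k m ε x) =
      fun x => ((ε * (‖k‖ ^ m)⁻¹ : ℝ) : ℂ) *
        ((Complex.exp (-(1 / 2) * ‖x‖ ^ 2 + Complex.I * (inner ℝ (ξ + k) x : ℝ)) +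
          Complex.exp (-(1 / 2) * ‖x‖ ^ 2 + Complex.I * (inner ℝ (ξ - k) x : ℝ))) / 2) := by
    funext x
    rw [← cexp_I_inner_mul_gaussian_mul_cos, vkme]
    push_cast
    ring
  have hpow : (2 * π) ^ d = ((2 * π) ^ ((d : ℝ) / 2)) ^ 2 := by
    rw [← Real.rpow_natCast, ← Real.rpow_mul_natCast (by positivity)]
    norm_num
  rw [FT, hintegrand, integral_const_mul, integral_div,
    integral_add (integrable_cexp_neg_half_sq_norm_add_I_inner _)
      (integrable_cexp_neg_half_sq_norm_add_I_inner _),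
    integral_cexp_neg_half_sq_norm_add_I_inner, integral_cexp_neg_half_sq_norm_add_I_inner,
    finrank_euclideanSpace_fin]
  norm_cast
  rw [hpow]
  field_simp

lemma norm_FT_vkme_le (hε : 0 ≤ ε) (hk : 1 ≤ ‖k‖) {ξ : Ed d} (hξ : 2 * ‖ξ‖ ≤ ‖k‖) :
    ‖FT (vkme k m ε) ξ‖ ≤ ε * Real.exp (-‖k‖ ^ 2 / 8) := by
  have hgauss : ∀ w : Ed d, ‖k‖ / 2 ≤ ‖w‖ → Real.exp (-‖w‖ ^ 2 / 2) ≤ Real.exp (-‖k‖ ^ 2 / 8) :=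
    fun w hw => Real.exp_le_exp.2 (by nlinarith [norm_nonneg k])
  have hplus : ‖k‖ / 2 ≤ ‖ξ + k‖ := by
    have := norm_sub_norm_le k (-ξ)
    rw [sub_neg_eq_add, norm_neg, add_comm] at this
    linarith
  have hminus : ‖k‖ / 2 ≤ ‖ξ - k‖ := by
    linarith [norm_sub_norm_le k ξ, norm_sub_rev k ξ]
  have hamp : ε * (‖k‖ ^ m)⁻¹ ≤ ε :=
    mul_le_of_le_one_right hε (inv_le_one_of_one_le₀ (one_le_pow₀ hk))
  have hP : 1 ≤ (2 * π) ^ ((d : ℝ) / 2) :=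
    Real.one_le_rpow (by linarith [Real.pi_gt_three]) (by positivity)
  rw [FT_vkme, Complex.norm_real, Real.norm_of_nonneg (by positivity)]
  calc ε * (‖k‖ ^ m)⁻¹ / (2 * (2 * π) ^ ((d : ℝ) / 2)) *
        (Real.exp (-‖ξ + k‖ ^ 2 / 2) + Real.exp (-‖ξ - k‖ ^ 2 / 2))
      ≤ ε * (‖k‖ ^ m)⁻¹ / (2 * (2 * π) ^ ((d : ℝ) / 2)) *
        (Real.exp (-‖k‖ ^ 2 / 8) + Real.exp (-‖k‖ ^ 2 / 8)) :=
        mul_le_mul_of_nonneg_left (add_le_add (hgauss _ hplus) (hgauss _ hminus)) (by positivity)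
    _ = ε * (‖k‖ ^ m)⁻¹ / (2 * π) ^ ((d : ℝ) / 2) * Real.exp (-‖k‖ ^ 2 / 8) := by ring
    _ ≤ ε * Real.exp (-‖k‖ ^ 2 / 8) :=
        mul_le_mul_of_nonneg_right ((div_le_self (by positivity) hP).trans hamp) (by positivity)

lemma FT_vkme_zero_pos (hε : 0 < ε) (hk : 0 < ‖k‖) : 0 < ‖FT (vkme k m ε) 0‖ := by
  rw [FT_vkme, zero_add, zero_sub, norm_neg, Complex.norm_real, norm_pos_iff]
  have hamp : 0 < ε * (‖k‖ ^ m)⁻¹ := mul_pos hε (inv_pos.2 (pow_pos hk m))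
  exact (mul_pos (div_pos hamp (by positivity)) (by positivity)).ne'

variable {r : ℝ}

lemma supNormOn_ball_FT_vkme_le (hε : 0 ≤ ε) (hk : 1 ≤ ‖k‖) (hkr : 2 * r ≤ ‖k‖) :
    supNormOn (ball d r) (FT (vkme k m ε)) ≤ ε * Real.exp (-‖k‖ ^ 2 / 8) :=
  supNormOn_le_s18 (by positivity) fun ξ (hξ : ‖ξ‖ < r) => norm_FT_vkme_le k m hε hk (by linarith)

lemma supNormOn_ball_FT_vkme_pos (hr : 0 < r) (hε : 0 < ε) (hk : 1 ≤ ‖k‖) (hkr : 2 * r ≤ ‖k‖) :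
    0 < supNormOn (ball d r) (FT (vkme k m ε)) :=
  (FT_vkme_zero_pos k m hε (by linarith)).trans_le <| norm_le_supNormOn_s18 (S := ball d r)
    (fun ξ (hξ : ‖ξ‖ < r) => norm_FT_vkme_le k m hε.le hk (by linarith))
    (show ‖(0 : Ed d)‖ < r by simpa using hr)

end Vkme

lemma sub_log_le_log_three_add_inv {S ε u : ℝ} (hS : 0 < S) (hε : 0 < ε)
    (h : S ≤ ε * Real.exp (-u)) : u - Real.log ε ≤ Real.log (3 + S⁻¹) := by
  have hinv : Real.exp u * ε⁻¹ ≤ S⁻¹ := by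
    simpa [mul_inv, ← Real.exp_neg] using inv_anti₀ hS h
  calc u - Real.log ε = Real.log (Real.exp u * ε⁻¹) := by
        rw [Real.log_mul (Real.exp_ne_zero u) (by positivity), Real.log_inv, Real.log_exp]; ring
    _ ≤ Real.log (3 + S⁻¹) := Real.log_le_log (by positivity) (by linarith)

lemma eventually_mul_rpow_neg_lt {m : ℕ} {a β c ε : ℝ} (ha : 0 < a) (hβ : (m : ℝ) / 2 < β)
    (hε : 0 < ε) : ∀ᶠ t : ℝ in Filter.atTop, c * (a * t ^ 2) ^ (-β) < ε * (t ^ m)⁻¹ := by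
  have hgap : 0 < 2 * β - m := by linarith
  have hdecay : Filter.Tendsto (fun t : ℝ => c * a ^ (-β) * t ^ (-(2 * β - m))) Filter.atTop
      (nhds 0) := by
    simpa only [mul_zero] using (tendsto_rpow_neg_atTop hgap).const_mul (c * a ^ (-β))
  filter_upwards [hdecay.eventually (gt_mem_nhds hε), Filter.eventually_gt_atTop 0] with t ht htpos
  have hsplit : c * (a * t ^ 2) ^ (-β) = c * a ^ (-β) * t ^ (-(2 * β - m)) * (t ^ m)⁻¹ := by
    rw [Real.mul_rpow ha.le (by positivity), ← Real.rpow_natCast t 2, ← Real.rpow_mul htpos.le,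
      ← Real.rpow_natCast t m, ← Real.rpow_neg htpos.le, mul_assoc _ (t ^ _), ← Real.rpow_add htpos]
    ring_nf
  rw [hsplit]
  exact mul_lt_mul_of_pos_right ht (by positivity)

theorem vkme_instability_Linfty_general {d : ℕ} (r ε : ℝ) (hr : 0 < r) (hε : 0 < ε)
    (m : ℕ) (β₁ c₁ : ℝ) (hβ : (m : ℝ) / 2 < β₁) (hc : 0 < c₁) :
    ∃ K : ℝ, 0 < K ∧
      ∀ k : Ed d, K ≤ ‖k‖ →
        supNormOn Set.univ (vkme k m ε) = ε * (‖k‖ ^ m)⁻¹ ∧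
        supNormOn Set.univ (vkme k m ε) >
          c₁ * Real.log (3 + (supNormOn (ball d r) (FT (vkme k m ε)))⁻¹) ^ (-β₁) := by
  obtain ⟨K, hK⟩ := Filter.eventually_atTop.1 <|
    (Filter.eventually_ge_atTop 1).and <| (Filter.eventually_ge_atTop (2 * r)).and <|
      ((Filter.tendsto_pow_atTop two_ne_zero).eventually_ge_atTop (16 * Real.log ε)).and <|
        eventually_mul_rpow_neg_lt (c := c₁) (a := 1 / 16) (by norm_num) hβ hε
  refine ⟨max K 1, by positivity, fun k hk => ?_⟩
  obtain ⟨hk1, hkr, hkε, hdecay⟩ := hK ‖k‖ (le_of_max_le_left hk)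
  have hsup := supNormOn_univ_vkme k m hε.le
  refine ⟨hsup, ?_⟩
  set S := supNormOn (ball d r) (FT (vkme k m ε))
  have hS : 0 < S := supNormOn_ball_FT_vkme_pos k m hr hε hk1 hkr
  have hlog : 1 / 16 * ‖k‖ ^ 2 ≤ Real.log (3 + S⁻¹) := by
    have hsmall := supNormOn_ball_FT_vkme_le k m hε.le hk1 hkr
    rw [neg_div] at hsmall
    linarith [sub_log_le_log_three_add_inv hS hε hsmall]
  rw [hsup, gt_iff_lt]
  have hβ₁ : 0 ≤ β₁ := le_trans (by positivity) hβ.le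
  calc c₁ * Real.log (3 + S⁻¹) ^ (-β₁) ≤ c₁ * (1 / 16 * ‖k‖ ^ 2) ^ (-β₁) :=
        mul_le_mul_of_nonneg_left
          (Real.rpow_le_rpow_of_nonpos (by nlinarith) hlog (neg_nonpos.2 hβ₁)) hc.le
    _ < ε * (‖k‖ ^ m)⁻¹ := hdecay

/-- Instability estimate (4.7) in the L^∞ norm. -/
theorem vkme_instability_Linfty {d : ℕ} (hd : 1 ≤ d) (r ε : ℝ) (hr : 0 < r) (hε : 0 < ε)
    (m : ℕ) (hm : 0 < m) (β₁ c₁ : ℝ) (hβ : (m : ℝ) / 2 < β₁) (hc : 0 < c₁) :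
    ∃ K : ℝ, 0 < K ∧
      ∀ k : Ed d, K ≤ ‖k‖ →
        supNormOn Set.univ (vkme k m ε) = ε * (‖k‖ ^ m)⁻¹ ∧
        supNormOn Set.univ (vkme k m ε) >
          c₁ * Real.log (3 + (supNormOn (ball d r) (FT (vkme k m ε)))⁻¹) ^ (-β₁) :=
  vkme_instability_Linfty_general r ε hr hε m β₁ c₁ hβ hc
end
end
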